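/- Every starry metric space fails to be doubling: if (X,d) is starry, then there is no constant K > 0 such that every closed ball B(x,r) in X can be covered by at most K closed balls of radius r/2. -/

import Mathlib

open Metric Set

/-- A metric space contains an `(A,η)`-approximate `n`-star. -/
def HasApproxStar (X : Type*) [PseudoMetricSpace X] (A η : ℝ) (n : ℕ) : Prop :=
  ∃ ρ : ℝ, 0 < ρ ∧ ∃ x : Fin (n + 1) → X,
    (∀ i j : Fin (n + 1), i ≠ 0 → j ≠ 0 → i ≠ j →
      (A - η) * ρ ≤ dist (x i) (x j) ∧ dist (x i) (x j) ≤ A * ρ) ∧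
    (∀ i : Fin (n + 1), i ≠ 0 → ρ ≤ dist (x 0) (x i) ∧ dist (x 0) (x i) ≤ (1 + η) * ρ)

/-- A metric space is starry if there are uniform `A > 1` and `0 < η < (A-1)/2` such that for
every `n` the space contains an `(Aₙ,η)`-approximate `n`-star for some `Aₙ ≥ A`. -/
def Starry (X : Type*) [PseudoMetricSpace X] : Prop :=
  ∃ A η : ℝ, 1 < A ∧ 0 < η ∧ η < (A - 1) / 2 ∧
    ∀ n : ℕ, ∃ An : ℝ, A ≤ An ∧ HasApproxStar X An η n

/-- `Ψ` is an increasing function `(0,∞) → (0,∞)`. -/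
def IncreasingOnPos (Ψ : ℝ → ℝ) : Prop :=
  (∀ t : ℝ, 0 < t → 0 < Ψ t) ∧ StrictMonoOn Ψ (Set.Ioi 0)

/-- A map `φ` is `Ψ`-quasisymmetric. -/
def IsQuasisymmetric {X Y : Type*} [PseudoMetricSpace X] [PseudoMetricSpace Y]
    (φ : X → Y) (Ψ : ℝ → ℝ) : Prop :=
  ∀ x y z : X, x ≠ y → x ≠ z → y ≠ z →
    dist (φ x) (φ y) / dist (φ x) (φ z) ≤ Ψ (dist x y / dist x z)

/-- A metric space is doubling: there is `K > 0` such that every closed ball `B(x,r)` can be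
covered by at most `K` closed balls of radius `r/2`. -/
def DoublingSpace (X : Type*) [PseudoMetricSpace X] : Prop :=
  ∃ K : ℕ, 0 < K ∧ ∀ (x : X) (r : ℝ), 0 < r →
    ∃ s : Finset X, s.card ≤ K ∧ closedBall x r ⊆ ⋃ y ∈ s, closedBall y (r / 2)

/-!
In an `(A, η)`-approximate `n`-star with `1 + η < A - η`, the `n` outer points lie in the closed
ball of radius `(1 + η) ρ` about the centre, yet any two of them are more than `(1 + η) ρ`
apart. So no ball of half that radius contains two of them, and covering that ball by balls of
half its radius takes at least `n` of them. Since a starry space has such stars for every `n`,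
no doubling constant can exist.
-/

section

variable {X : Type*} [PseudoMetricSpace X]

theorem Finset.card_le_card_of_separated_of_mem_closedBall {ι : Type*} {t : Finset ι}
    {s : Finset X} {p : ι → X} {r : ℝ}
    (hsep : (t : Set ι).Pairwise fun i j => 2 * r < dist (p i) (p j))
    (hcov : ∀ i ∈ t, ∃ y ∈ s, p i ∈ closedBall y r) : t.card ≤ s.card := by
  refine Finset.card_le_card_of_forall_subsingleton (fun i y => p i ∈ closedBall y r) hcov ?_
  rintro y - i ⟨hi, hiy⟩ j ⟨hj, hjy⟩
  by_contra hne
  have hclose : dist (p i) (p j) ≤ 2 * r :=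
    calc dist (p i) (p j) ≤ dist (p i) y + dist (p j) y := dist_triangle_right _ _ _
      _ ≤ 2 * r := by linarith [mem_closedBall.mp hiy, mem_closedBall.mp hjy]
  exact (hsep hi hj hne).not_ge hclose

theorem HasApproxStar.le_of_closedBall_cover_card_le {A η : ℝ} {n K : ℕ}
    (hstar : HasApproxStar X A η n) (hη : 0 < η) (hA : 1 + η < A - η)
    (hK : ∀ (x : X) (r : ℝ), 0 < r →
      ∃ s : Finset X, s.card ≤ K ∧ closedBall x r ⊆ ⋃ y ∈ s, closedBall y (r / 2)) :
    n ≤ K := by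
  obtain ⟨ρ, hρ, x, hsep, hnear⟩ := hstar
  obtain ⟨s, hsK, hs⟩ := hK (x 0) ((1 + η) * ρ) (by positivity)
  have houter_sep : ((Finset.univ : Finset (Fin n)) : Set (Fin n)).Pairwise
      fun i j => 2 * ((1 + η) * ρ / 2) < dist (x i.succ) (x j.succ) := by
    intro i _ j _ hij
    have := (hsep i.succ j.succ i.succ_ne_zero j.succ_ne_zero (Fin.succ_injective _ |>.ne hij)).1
    nlinarith
  have houter_cov (i : Fin n) (_ : i ∈ Finset.univ) :
      ∃ y ∈ s, x i.succ ∈ closedBall y ((1 + η) * ρ / 2) := by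
    have hball : x i.succ ∈ closedBall (x 0) ((1 + η) * ρ) := by
      rw [mem_closedBall, dist_comm]
      exact (hnear _ i.succ_ne_zero).2
    simpa only [mem_iUnion, exists_prop] using hs hball
  simpa using (Finset.card_le_card_of_separated_of_mem_closedBall houter_sep houter_cov).trans hsK

end

theorem starry_not_doubling {X : Type*} [MetricSpace X] (hX : Starry X) :
    ¬ DoublingSpace X := by
  rintro ⟨K, -, hK⟩
  obtain ⟨A, η, -, hη, hηA, hstar⟩ := hX
  obtain ⟨An, hAAn, hstarK⟩ := hstar (K + 1)
  have hK1 : K + 1 ≤ K := hstarK.le_of_closedBall_cover_card_le hη (by linarith) hK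
  omega
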